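/- arXiv:2503.19919 — 4 statements merged into one kernel-verified Lean document; each statement's English description precedes it below -/
import Mathlib

section
/- For all natural numbers n and j with n ≤ j, the real polynomial P(X) = Σ_{k=1}^{2^n} s_k · (X + k)^j has degree exactly j − n, where s_k = (−1)^{ν(k−1)} and ν(m) denotes the number of ones in the binary expansion of m. -/
/-!
Write `f_n` for `tmPoly n j`. Since `ν(2^n + m) = ν(m) + 1` for `m < 2^n`, the signs satisfy
`s (k + 2^n) = -s k` for `1 ≤ k ≤ 2^n`, so `f_{n+1}(X) = f_n(X) - f_n(X + 2^n)`. In characteristic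
zero a difference `P(X) - P(X + r)` with `r ≠ 0` has degree exactly `deg P - 1`: its coefficient at
`deg P - 1` is `-(deg P) · lc(P) · r`. Induction on `n` starting from `f_0 = (X + 1)^j` gives
degree `j - n`.
-/

/-- Thue–Morse sign: `s k = (-1)^(number of ones in binary expansion of k-1)`. -/
def tmSign (k : ℕ) : ℝ := (-1 : ℝ) ^ ((Nat.digits 2 (k - 1)).sum)

open Polynomial Finset

theorem Nat.digits_sum_add_base_pow_mul {b n m a : ℕ} (hb : 1 < b) (hm : m < b ^ n) :
    (Nat.digits b (m + b ^ n * a)).sum = (Nat.digits b m).sum + (Nat.digits b a).sum := by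
  rcases Nat.eq_zero_or_pos a with rfl | ha
  · simp
  obtain ⟨k, hk⟩ := Nat.exists_eq_add_of_le ((Nat.digits_length_le_iff hb m).2 hm)
  rw [hk, ← Nat.digits_append_zeroes_append_digits hb ha]
  simp

theorem tmSign_add_two_pow {n k : ℕ} (hk₀ : 1 ≤ k) (hk : k ≤ 2 ^ n) :
    tmSign (k + 2 ^ n) = -tmSign k := by
  have h := Nat.digits_sum_add_base_pow_mul (a := 1) one_lt_two (show k - 1 < 2 ^ n by omega)
  rw [tmSign, tmSign, show k + 2 ^ n - 1 = k - 1 + 2 ^ n * 1 by omega, h]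
  simp [pow_succ]

theorem Finset.sum_Icc_one_add {M : Type*} [AddCommMonoid M] (f : ℕ → M) (m l : ℕ) :
    ∑ k ∈ Icc 1 (m + l), f k = ∑ k ∈ Icc 1 m, f k + ∑ k ∈ Icc 1 l, f (k + m) := by
  have hIcc (b : ℕ) : Icc 1 b = Ioc 0 b := Icc_add_one_left_eq_Ioc 0 b
  have hshift : Ioc m (m + l) = (Ioc 0 l).map (addRightEmbedding m) := by
    rw [map_add_right_Ioc, zero_add, add_comm]
  rw [hIcc, hIcc, hIcc, ← sum_Ioc_consecutive f (Nat.zero_le m) (Nat.le_add_right m l), hshift,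
    sum_map]
  rfl

namespace Polynomial

variable {R : Type*}

theorem coeff_taylor_natDegree_sub_one [CommSemiring R] (f : R[X]) (r : R) :
    (taylor r f).coeff (f.natDegree - 1) =
      f.coeff (f.natDegree - 1) + f.natDegree * f.leadingCoeff * r := by
  rcases Nat.eq_zero_or_pos f.natDegree with hd | hd
  · rw [eq_C_of_natDegree_eq_zero hd]; simp
  have hle : (hasseDeriv (f.natDegree - 1) f).natDegree < 2 := by
    have := natDegree_hasseDeriv_le f (f.natDegree - 1)
    omega
  rw [taylor_coeff, eval_eq_sum_range' hle, sum_range_succ, sum_range_one, hasseDeriv_coeff,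
    hasseDeriv_coeff, show 1 + (f.natDegree - 1) = f.natDegree by omega,
    Nat.choose_symm_of_eq_add (show f.natDegree = (f.natDegree - 1) + 1 by omega)]
  simp

theorem degree_sub_taylor [CommRing R] [NoZeroDivisors R] [CharZero R] {f : R[X]} {r : R}
    (hr : r ≠ 0) (hf : 0 < f.natDegree) :
    (f - taylor r f).degree = (f.natDegree - 1 : ℕ) := by
  have htop : (f - taylor r f).coeff f.natDegree = 0 := by
    rw [coeff_sub, coeff_taylor_natDegree, leadingCoeff, sub_self]
  have hle : (f - taylor r f).natDegree ≤ f.natDegree - 1 :=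
    natDegree_le_pred ((natDegree_sub_le_iff_left (natDegree_taylor f r).le).2 le_rfl) htop
  refine degree_eq_of_le_of_coeff_ne_zero (degree_le_of_natDegree_le hle) ?_
  have hlead : f.leadingCoeff ≠ 0 := leadingCoeff_ne_zero.2 (ne_zero_of_natDegree_gt hf)
  rw [coeff_sub, coeff_taylor_natDegree_sub_one]
  simp [hr, hlead, hf.ne']

end Polynomial

noncomputable def tmPoly (n j : ℕ) : ℝ[X] :=
  ∑ k ∈ Icc 1 (2 ^ n), C (tmSign k) * (X + C (k : ℝ)) ^ j

theorem tmPoly_succ (n j : ℕ) :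
    tmPoly (n + 1) j = tmPoly n j - taylor (2 ^ n : ℝ) (tmPoly n j) := by
  rw [tmPoly, pow_succ, mul_two, sum_Icc_one_add, tmPoly, map_sum, sub_eq_add_neg,
    ← sum_neg_distrib]
  congr 1
  refine sum_congr rfl fun k hk => ?_
  rw [mem_Icc] at hk
  rw [tmSign_add_two_pow hk.1 hk.2, taylor_mul, taylor_C, taylor_pow, map_add, taylor_X, taylor_C]
  push_cast
  rw [C_add, C_pow, map_neg]
  ring

theorem stmt0 (n j : ℕ) (h : n ≤ j) :
    (∑ k ∈ Finset.Icc 1 (2 ^ n),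
        Polynomial.C (tmSign k) * (Polynomial.X + Polynomial.C (k : ℝ)) ^ j).degree
      = ((j - n : ℕ) : WithBot ℕ) := by
  change (tmPoly n j).degree = _
  induction n with
  | zero =>
    have h₀ : tmPoly 0 j = (X + C 1) ^ j := by simp [tmPoly, tmSign]
    rw [h₀, degree_pow, degree_X_add_C, nsmul_one, Nat.sub_zero]
  | succ n ih =>
    have hdeg := ih (by omega)
    have hnat : (tmPoly n j).natDegree = j - n := natDegree_eq_of_degree_eq_some hdeg
    rw [tmPoly_succ, degree_sub_taylor (by positivity) (by omega), hnat, Nat.sub_sub]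
end

section
/- For all natural numbers j and n with j < n, and for every real number x, the signed sum Σ_{k=1}^{2^n} s_k · (x + k)^j equals 0, where s_k = (−1)^{ν(k−1)} and ν(m) denotes the number of ones in the binary expansion of m. -/
open Finset Polynomial

theorem Nat.digits_sum_add_base_pow {b n m : ℕ} (hb : 1 < b) (hm : m < b ^ n) :
    (Nat.digits b (m + b ^ n)).sum = (Nat.digits b m).sum + 1 := by
  have hlen : (Nat.digits b m).length ≤ n := (Nat.digits_length_le_iff hb m).mpr hm
  have hdigits := Nat.digits_append_zeroes_append_digits (k := n - (Nat.digits b m).length)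
    (n := m) (m := 1) hb one_pos
  rw [Nat.add_sub_cancel' hlen, mul_one] at hdigits
  rw [← hdigits]
  simp [Nat.digits_of_lt b 1 one_ne_zero hb]

theorem tmSign_two_pow_add {n m : ℕ} (hm₁ : 1 ≤ m) (hm₂ : m ≤ 2 ^ n) :
    tmSign (2 ^ n + m) = -tmSign m := by
  rw [tmSign, tmSign, show 2 ^ n + m - 1 = m - 1 + 2 ^ n by omega,
    Nat.digits_sum_add_base_pow one_lt_two (by omega), pow_succ, mul_neg_one]

theorem Polynomial.degree_taylor_sub_lt {R : Type*} [Ring R] {p : R[X]} (hp : p ≠ 0) (r : R) :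
    (taylor r p - p).degree < p.degree :=
  (degree_sub_lt_left (degree_taylor p r) (by rwa [Ne, taylor_eq_zero])
    (leadingCoeff_taylor r p)).trans_eq (degree_taylor p r)

noncomputable def tmSum (n : ℕ) (f : ℝ → ℝ) (x : ℝ) : ℝ :=
  ∑ k ∈ Icc 1 (2 ^ n), tmSign k * f (x + k)

theorem tmSum_succ (n : ℕ) (f : ℝ → ℝ) (x : ℝ) :
    tmSum (n + 1) f x = -tmSum n (fun y ↦ f (y + 2 ^ n) - f y) x := by
  have hIcc (a b : ℕ) : Icc (a + 1) b = Ioc a b := Icc_succ_left_eq_Ioc a b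
  have hupper : ∑ k ∈ Ioc (2 ^ n) (2 ^ n + 2 ^ n), tmSign k * f (x + k) =
      -∑ k ∈ Icc 1 (2 ^ n), tmSign k * f (x + k + 2 ^ n) := by
    rw [← hIcc, ← map_add_left_Icc, sum_map, ← sum_neg_distrib]
    refine sum_congr rfl fun m hm ↦ ?_
    rw [mem_Icc] at hm
    simp only [addLeftEmbedding_apply, tmSign_two_pow_add hm.1 hm.2]
    push_cast
    ring_nf
  rw [tmSum, tmSum, pow_succ, mul_two, (hIcc 0 _ : Icc 1 _ = _),
    ← sum_Ioc_consecutive _ (Nat.zero_le _) le_self_add, hupper, ← (hIcc 0 _ : Icc 1 _ = _)]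
  simp only [mul_sub, sum_sub_distrib]
  ring

theorem tmSum_eval_eq_zero {n : ℕ} {p : ℝ[X]} (hp : p.degree < n) (x : ℝ) :
    tmSum n p.eval x = 0 := by
  induction n generalizing p x with
  | zero => simp [degree_eq_bot.mp (by simpa using hp), tmSum]
  | succ n ih =>
    rcases eq_or_ne p 0 with rfl | hp0
    · simp [tmSum]
    have hdiff : (taylor (2 ^ n) p - p).degree < n :=
      (degree_taylor_sub_lt hp0 _).trans_le (Order.le_of_lt_succ (by exact_mod_cast hp))
    simpa [tmSum_succ, taylor_eval] using ih hdiff x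

theorem stmt1 (j n : ℕ) (h : j < n) (x : ℝ) :
    ∑ k ∈ Finset.Icc 1 (2 ^ n), tmSign k * (x + k) ^ j = 0 := by
  simpa [tmSum] using tmSum_eval_eq_zero (p := X ^ j) (by simpa using h) x
end

section
/- Let n be a natural number and let j be a real number with 0 ≤ j < n. Then the function f_n^j(x) = Σ_{k=1}^{2^n} s_k · (x + k)^j (with (x+k)^j the real power for x+k > 0) tends to 0 as x → ∞, where s_k = (−1)^{ν(k−1)} and ν(m) denotes the number of ones in the binary expansion of m. -/
open Filter Finset Asymptotics

theorem Nat.digits_sum_base_pow_add {b n m : ℕ} (hb : 1 < b) (hm : m < b ^ n) :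
    (b.digits (b ^ n + m)).sum = (b.digits m).sum + 1 := by
  have hlen := (Nat.digits_length_le_iff hb m).2 hm
  have h := Nat.digits_append_zeroes_append_digits (k := n - (b.digits m).length) (n := m) hb
    one_pos
  rw [Nat.add_sub_cancel' hlen, mul_one, add_comm] at h
  simp [← h, Nat.digits_of_lt b 1 one_ne_zero hb]

theorem Real.rpow_le_rpow_add_rpow_of_mem_Icc {a b y : ℝ} (e : ℝ) (ha : 0 < a)
    (hy : y ∈ Set.Icc a b) : y ^ e ≤ a ^ e + b ^ e := by
  have hb : 0 < b := ha.trans_le (hy.1.trans hy.2)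
  rcases le_total 0 e with he | he
  · linarith [Real.rpow_le_rpow (ha.le.trans hy.1) hy.2 he, Real.rpow_pos_of_pos ha e]
  · linarith [Real.rpow_le_rpow_of_nonpos ha hy.1 he, Real.rpow_pos_of_pos hb e]

theorem isBigO_rpow_add_const_atTop (e h : ℝ) :
    (fun x : ℝ => (x + h) ^ e) =O[atTop] (fun x => x ^ e) := by
  refine IsBigO.of_bound ((1 / 2) ^ e + 2 ^ e) ?_
  filter_upwards [eventually_ge_atTop (2 * |h|), eventually_gt_atTop 0] with x hxh hx
  have hmem : x + h ∈ Set.Icc (x / 2) (2 * x) := by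
    constructor <;> linarith [neg_abs_le h, le_abs_self h]
  have hxh0 : 0 < x + h := by linarith [hmem.1]
  rw [Real.norm_of_nonneg (Real.rpow_nonneg hxh0.le e),
    Real.norm_of_nonneg (Real.rpow_nonneg hx.le e)]
  calc (x + h) ^ e ≤ (x / 2) ^ e + (2 * x) ^ e :=
        Real.rpow_le_rpow_add_rpow_of_mem_Icc e (by positivity) hmem
    _ = ((1 / 2) ^ e + 2 ^ e) * x ^ e := by
        rw [div_eq_mul_one_div, Real.mul_rpow hx.le (by norm_num),
          Real.mul_rpow (by norm_num) hx.le]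
        ring

theorem isBigO_sub_comp_add_of_hasDerivAt {g g' : ℝ → ℝ} {e h : ℝ} (hh : 0 ≤ h)
    (hg : ∀ᶠ y in atTop, HasDerivAt g (g' y) y) (hg' : g' =O[atTop] (· ^ e)) :
    (fun x => g x - g (x + h)) =O[atTop] (· ^ e) := by
  obtain ⟨C, hC, hCg'⟩ := hg'.exists_nonneg
  have hbound : (fun x => g x - g (x + h)) =O[atTop] (fun x => x ^ e + (x + h) ^ e) := by
    refine IsBigO.of_bound (C * h) ?_
    have hev := eventually_forall_ge_atTop.2 ((hg.and hCg'.bound).and (eventually_gt_atTop 0))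
    filter_upwards [hev, eventually_gt_atTop 0] with x hx hx0
    have hderiv : ∀ y ∈ Set.Icc x (x + h), HasDerivWithinAt g (g' y) (Set.Icc x (x + h)) y :=
      fun y hy => (hx y hy.1).1.1.hasDerivWithinAt
    have hnorm : ∀ y ∈ Set.Icc x (x + h), ‖g' y‖ ≤ C * (x ^ e + (x + h) ^ e) := by
      intro y hy
      obtain ⟨⟨-, hy'⟩, hy0⟩ := hx y hy.1
      rw [Real.norm_of_nonneg (Real.rpow_nonneg hy0.le e)] at hy'
      exact hy'.trans (mul_le_mul_of_nonneg_left
        (Real.rpow_le_rpow_add_rpow_of_mem_Icc e hx0 hy) hC)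
    have := (convex_Icc x (x + h)).norm_image_sub_le_of_norm_hasDerivWithin_le hderiv hnorm
      (Set.left_mem_Icc.2 (by linarith)) (Set.right_mem_Icc.2 (by linarith))
    rw [norm_sub_rev, add_sub_cancel_left, Real.norm_of_nonneg hh] at this
    have hpos : 0 ≤ x ^ e + (x + h) ^ e :=
      add_nonneg (Real.rpow_nonneg hx0.le e) (Real.rpow_nonneg (by linarith) e)
    rw [Real.norm_of_nonneg hpos]
    linarith
  exact hbound.trans ((isBigO_refl _ _).add (isBigO_rpow_add_const_atTop e h))

noncomputable def thueMorseSum (n : ℕ) (j x : ℝ) : ℝ :=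
  ∑ k ∈ Icc 1 (2 ^ n), tmSign k * (x + k) ^ j

theorem tmSign_two_pow_add_succ {n i : ℕ} (hi : i < 2 ^ n) :
    tmSign (2 ^ n + i + 1) = -tmSign (i + 1) := by
  rw [tmSign, tmSign, Nat.add_sub_cancel, Nat.add_sub_cancel,
    Nat.digits_sum_base_pow_add one_lt_two hi, pow_succ, mul_neg_one]

theorem thueMorseSum_eq_sum_range (n : ℕ) (j x : ℝ) :
    thueMorseSum n j x = ∑ i ∈ range (2 ^ n), tmSign (i + 1) * (x + (i + 1 : ℕ)) ^ j := by
  rw [thueMorseSum, range_eq_Ico, sum_Ico_add' (fun k => tmSign k * (x + k) ^ j),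
    zero_add, Ico_add_one_right_eq_Icc]

theorem thueMorseSum_succ (n : ℕ) (j x : ℝ) :
    thueMorseSum (n + 1) j x = thueMorseSum n j x - thueMorseSum n j (x + 2 ^ n) := by
  simp only [thueMorseSum_eq_sum_range, pow_succ, mul_two, sum_range_add, sub_eq_add_neg,
    ← sum_neg_distrib]
  congr 1
  refine sum_congr rfl fun i hi => ?_
  rw [tmSign_two_pow_add_succ (mem_range.1 hi)]
  push_cast
  ring_nf

theorem hasDerivAt_thueMorseSum (n : ℕ) (j : ℝ) {x : ℝ} (hx : -1 < x) :
    HasDerivAt (thueMorseSum n j) (j * thueMorseSum n (j - 1) x) x := by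
  rw [thueMorseSum, mul_sum]
  refine HasDerivAt.fun_sum fun k hk => ?_
  have hbase : x + k ≠ 0 := by
    have : (1 : ℝ) ≤ k := by exact_mod_cast (mem_Icc.1 hk).1
    linarith
  exact ((((hasDerivAt_id' x).add_const (k : ℝ)).rpow_const (Or.inl hbase)).const_mul
    (tmSign k)).congr_deriv (by ring)

theorem thueMorseSum_isBigO (n : ℕ) (j : ℝ) :
    thueMorseSum n j =O[atTop] (· ^ (j - n)) := by
  induction n generalizing j with
  | zero =>
    have h0 : thueMorseSum 0 j = fun x => (x + 1) ^ j :=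
      funext fun x => by simp [thueMorseSum, tmSign]
    simpa [h0] using isBigO_rpow_add_const_atTop j 1
  | succ n ih =>
    have hstep := isBigO_sub_comp_add_of_hasDerivAt (h := 2 ^ n) (by positivity)
      ((eventually_gt_atTop (-1)).mono fun x hx => hasDerivAt_thueMorseSum n j hx)
      ((ih (j - 1)).const_mul_left j)
    convert hstep using 1
    · exact funext (thueMorseSum_succ n j)
    · push_cast
      ring_nf

theorem stmt3_general (n : ℕ) (j : ℝ) (hjn : j < n) :
    Filter.Tendsto (fun x : ℝ => ∑ k ∈ Finset.Icc 1 (2 ^ n), tmSign k * (x + k) ^ j)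
      Filter.atTop (nhds 0) := by
  have hdecay : Tendsto (fun x : ℝ => x ^ (j - n)) atTop (nhds 0) := by
    simpa only [neg_sub] using tendsto_rpow_neg_atTop (sub_pos.2 hjn)
  exact (thueMorseSum_isBigO n j).trans_tendsto hdecay

theorem stmt3 (n : ℕ) (j : ℝ) (hj0 : 0 ≤ j) (hjn : j < n) :
    Filter.Tendsto (fun x : ℝ => ∑ k ∈ Finset.Icc 1 (2 ^ n), tmSign k * (x + k) ^ j)
      Filter.atTop (nhds 0) :=
  stmt3_general n j hjn
end

section
/- Let n be a natural number, let j ≥ 0 be a real number, and let x be a real number with x > 2^n. Then Σ_{k=1}^{2^n} s_k · (x + k)^j = x^j · Σ_{i=0}^{∞} C(j, i) · x^{−i} · (Σ_{k=1}^{2^n} s_k · k^i), where the series on the right converges, C(j, i) = (Π_{l=0}^{i−1} (j − l)) / i! is the generalized binomial coefficient, s_k = (−1)^{ν(k−1)}, ν(m) is the number of ones in the binary expansion of m, and (x+k)^j and x^j are real powers (rpow) on positive bases. -/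
/-- Generalized binomial coefficient `C(j, i) = j(j-1)⋯(j-i+1)/i!` for real `j`. -/
noncomputable def genBinom (j : ℝ) (i : ℕ) : ℝ := (∏ l ∈ Finset.range i, (j - l)) / (Nat.factorial i)

lemma genBinom_eq_choose (j : ℝ) (i : ℕ) : genBinom j i = Ring.choose j i := by
  rw [Ring.choose_eq_smul, smul_eq_mul, ← Polynomial.aeval_eq_smeval, Polynomial.aeval_def,
    Polynomial.eval₂_eq_eval_map, descPochhammer_map, descPochhammer_eval_eq_prod_range,
    genBinom, div_eq_inv_mul]

lemma hasSum_genBinom_mul_pow {j t : ℝ} (ht : |t| < 1) :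
    HasSum (fun i => genBinom j i * t ^ i) ((1 + t) ^ j) := by
  have h := (Real.one_add_rpow_hasFPowerSeriesOnBall_zero (a := j)).hasSum (y := t)
    (by simpa [Metric.mem_eball, edist_dist] using ht)
  simpa [binomialSeries, FormalMultilinearSeries.ofScalars_apply_eq, genBinom_eq_choose,
    mul_comm] using h

lemma hasSum_add_rpow {j x y : ℝ} (hx : 0 < x) (hy : |y| < x) :
    HasSum (fun i : ℕ => x ^ j * (genBinom j i * x ^ (-(i : ℝ)) * y ^ i)) ((x + y) ^ j) := by
  have hyx : |y / x| < 1 := by rwa [abs_div, abs_of_pos hx, div_lt_one hx]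
  have hxy : x + y = x * (1 + y / x) := by field_simp
  rw [hxy, Real.mul_rpow hx.le (by linarith [(abs_lt.mp hyx).1])]
  refine (hasSum_genBinom_mul_pow hyx).mul_left (x ^ j) |>.congr_fun fun i => ?_
  rw [Real.rpow_neg hx.le, Real.rpow_natCast, div_pow]
  ring

lemma hasSum_sum_mul_add_rpow {ι : Type*} (s : Finset ι) (w y : ι → ℝ) {j x : ℝ} (hx : 0 < x)
    (hy : ∀ k ∈ s, |y k| < x) :
    HasSum (fun i : ℕ => x ^ j * (genBinom j i * x ^ (-(i : ℝ)) * ∑ k ∈ s, w k * y k ^ i))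
      (∑ k ∈ s, w k * (x + y k) ^ j) := by
  refine hasSum_sum (fun k hk => (hasSum_add_rpow hx (hy k hk)).mul_left (w k)) |>.congr_fun
    fun i => ?_
  simp only [Finset.mul_sum]
  exact Finset.sum_congr rfl fun k _ => by ring

theorem stmt8_general (n : ℕ) (j : ℝ) (x : ℝ) (hx : (2 : ℝ) ^ n < x) :
    Summable (fun i : ℕ =>
        genBinom j i * x ^ (-(i : ℝ)) * ∑ k ∈ Finset.Icc 1 (2 ^ n), tmSign k * (k : ℝ) ^ i)
      ∧ ∑ k ∈ Finset.Icc 1 (2 ^ n), tmSign k * (x + k) ^ j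
        = x ^ j * ∑' i : ℕ,
            genBinom j i * x ^ (-(i : ℝ)) * ∑ k ∈ Finset.Icc 1 (2 ^ n), tmSign k * (k : ℝ) ^ i := by
  have hx0 : 0 < x := lt_trans (by positivity) hx
  have hk : ∀ k ∈ Finset.Icc 1 (2 ^ n), |((k : ℕ) : ℝ)| < x := fun k hk => by
    rw [Nat.abs_cast]
    exact lt_of_le_of_lt (by exact_mod_cast (Finset.mem_Icc.mp hk).2) hx
  have H := hasSum_sum_mul_add_rpow _ tmSign (fun k : ℕ => (k : ℝ)) (j := j) hx0 hk
  have hxj : x ^ j ≠ 0 := (Real.rpow_pos_of_pos hx0 j).ne'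
  exact ⟨(summable_mul_left_iff hxj).mp H.summable, by rw [← H.tsum_eq, tsum_mul_left]⟩

theorem stmt8 (n : ℕ) (j : ℝ) (hj : 0 ≤ j) (x : ℝ) (hx : (2 : ℝ) ^ n < x) :
    Summable (fun i : ℕ =>
        genBinom j i * x ^ (-(i : ℝ)) * ∑ k ∈ Finset.Icc 1 (2 ^ n), tmSign k * (k : ℝ) ^ i)
      ∧ ∑ k ∈ Finset.Icc 1 (2 ^ n), tmSign k * (x + k) ^ j
        = x ^ j * ∑' i : ℕ,
            genBinom j i * x ^ (-(i : ℝ)) * ∑ k ∈ Finset.Icc 1 (2 ^ n), tmSign k * (k : ℝ) ^ i :=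
  stmt8_general n j x hx
end
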